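/- For 0 < k ≤ 1, if in triangle ABC the cevians AA₁ and BB₁ are k-trisectors, meaning ∠BAA₁ = k·∠BAC and ∠ABB₁ = k·∠ABC, and AA₁ = BB₁, then ∠BAC = ∠ABC and the triangle is isosceles (generalized Steiner–Lehmus theorem). -/

import Mathlib

/-!
Let `α = ∠BAC` and `β = ∠ABC`. The oriented hypothesis `∡BAA₁ = k·∡BAC` puts `A₁` on the
side of `AB` where triangle `ABA₁` has angles `kα` at `A` and `π - kα - β` at `A₁`, so the law
of sines gives `AA₁ · sin (kα + β) = AB · sin β`, and symmetrically
`BB₁ · sin (kβ + α) = AB · sin α`. Hence `AA₁ = BB₁` forces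
`sin α · sin (kα + β) = sin β · sin (kβ + α)`. For `β < α`, writing `α = s + d`, `β = s - d`, the
difference of the two sides is `2 (sin d sin ks cos (d - kd) + sin s sin kd cos (s + ks))`,
which is positive because `t ↦ sin (kt) / sin t` is increasing on `(0, π)`.
-/

open EuclideanGeometry Real

noncomputable section

abbrev Pt : Type := EuclideanSpace ℝ (Fin 2)

namespace SteinerLehmus

theorem sin_mul_mul_cos_le_mul_cos_mul_mul_sin {k t : ℝ} (hk0 : 0 ≤ k) (hk1 : k ≤ 1)
    (ht0 : 0 ≤ t) (htπ : t ≤ π) : sin (k * t) * cos t ≤ k * cos (k * t) * sin t := by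
  let N : ℝ → ℝ := fun t ↦ k * cos (k * t) * sin t - sin (k * t) * cos t
  have hN : ∀ t, HasDerivAt N ((1 - k ^ 2) * (sin (k * t) * sin t)) t := fun t ↦ by
    have hkt : HasDerivAt (fun t ↦ k * t) k t := by simpa using (hasDerivAt_id t).const_mul k
    exact (((hkt.cos.const_mul k).mul (hasDerivAt_sin t)).sub
      (hkt.sin.mul (hasDerivAt_cos t))).congr_deriv (by ring)
  have hmono : MonotoneOn N (Set.Icc 0 π) := by
    refine monotoneOn_of_hasDerivWithinAt_nonneg (convex_Icc 0 π)
      (fun x _ ↦ (hN x).continuousAt.continuousWithinAt) (fun x _ ↦ (hN x).hasDerivWithinAt) ?_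
    intro x hx
    rw [interior_Icc] at hx
    have hkx : k * x ≤ π := by nlinarith [hx.2]
    have := sin_nonneg_of_nonneg_of_le_pi (mul_nonneg hk0 hx.1.le) hkx
    have := sin_nonneg_of_nonneg_of_le_pi hx.1.le hx.2.le
    have : 0 ≤ 1 - k ^ 2 := by nlinarith
    positivity
  have := hmono ⟨le_rfl, pi_pos.le⟩ ⟨ht0, htπ⟩ ht0
  simp only [N, mul_zero, sin_zero, zero_mul, sub_zero] at this
  linarith

theorem monotoneOn_sin_mul_div_sin {k : ℝ} (hk0 : 0 ≤ k) (hk1 : k ≤ 1) :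
    MonotoneOn (fun t ↦ sin (k * t) / sin t) (Set.Ioo 0 π) := by
  have hder : ∀ t ∈ Set.Ioo 0 π, HasDerivAt (fun t ↦ sin (k * t) / sin t)
      ((k * cos (k * t) * sin t - sin (k * t) * cos t) / sin t ^ 2) t := fun t ht ↦ by
    have hkt : HasDerivAt (fun t ↦ k * t) k t := by simpa using (hasDerivAt_id t).const_mul k
    exact (hkt.sin.div (hasDerivAt_sin t) (sin_pos_of_pos_of_lt_pi ht.1 ht.2).ne').congr_deriv
      (by ring)
  refine monotoneOn_of_hasDerivWithinAt_nonneg (convex_Ioo 0 π)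
    (fun t ht ↦ (hder t ht).continuousAt.continuousWithinAt)
    (fun t ht ↦ (hder t (interior_subset ht)).hasDerivWithinAt) fun t ht ↦ ?_
  rw [interior_Ioo] at ht
  have := sin_mul_mul_cos_le_mul_cos_mul_mul_sin hk0 hk1 ht.1.le ht.2.le
  exact div_nonneg (by linarith) (sq_nonneg _)

theorem sin_mul_sin_mul_cos_add_sin_mul_sin_mul_cos_pos {k d s : ℝ} (hk0 : 0 < k) (hk1 : k ≤ 1)
    (hd : 0 < d) (hds : d < s) (hs : s < π / 2) :
    0 < sin d * sin (k * s) * cos (d - k * d) + sin s * sin (k * d) * cos (s + k * s) := by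
  have hπ := pi_pos
  have hks : k * s ≤ s := mul_le_of_le_one_left (by linarith) hk1
  have hkd : k * d ≤ d := mul_le_of_le_one_left hd.le hk1
  have hkd0 : 0 < k * d := mul_pos hk0 hd
  have hsin_d : 0 < sin d := sin_pos_of_pos_of_lt_pi hd (by linarith)
  have hsin_s : 0 < sin s := sin_pos_of_pos_of_lt_pi (by linarith) (by linarith)
  have hsin_ks : 0 < sin (k * s) := sin_pos_of_pos_of_lt_pi (by nlinarith) (by linarith)
  have hsin_kd : 0 < sin (k * d) := sin_pos_of_pos_of_lt_pi hkd0 (by linarith)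
  have hcos : 0 < cos (d - k * d) := cos_pos_of_mem_Ioo ⟨by linarith, by linarith⟩
  rcases le_or_gt 0 (cos (s + k * s)) with hc | hc
  · have := mul_nonneg (mul_pos hsin_s hsin_kd).le hc
    have := mul_pos (mul_pos hsin_d hsin_ks) hcos
    linarith
  -- when `cos (s + k s) < 0`, trade `sin s * sin (k d)` for the larger `sin d * sin (k s)`
  have hratio : sin (k * d) * sin s ≤ sin (k * s) * sin d := by
    have := monotoneOn_sin_mul_div_sin hk0.le hk1 ⟨hd, by linarith⟩ ⟨by linarith, by linarith⟩
      hds.le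
    rwa [div_le_div_iff₀ hsin_d hsin_s] at this
  have hsum : 0 < cos (d - k * d) + cos (s + k * s) := by
    rw [cos_add_cos]
    have h₁ : 0 < cos ((d - k * d + (s + k * s)) / 2) :=
      cos_pos_of_mem_Ioo ⟨by nlinarith, by nlinarith⟩
    have h₂ : 0 < cos ((d - k * d - (s + k * s)) / 2) :=
      cos_pos_of_mem_Ioo ⟨by nlinarith, by nlinarith⟩
    positivity
  nlinarith [mul_le_mul_of_nonpos_right hratio hc.le,
    mul_pos (mul_pos hsin_d hsin_ks) hsum]

theorem sin_mul_sin_mul_add_lt_sin_mul_sin_mul_add {k α β : ℝ} (hk0 : 0 < k) (hk1 : k ≤ 1)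
    (hβ : 0 < β) (hβα : β < α) (hαβ : α + β < π) :
    sin β * sin (k * β + α) < sin α * sin (k * α + β) := by
  obtain ⟨s, d, rfl, rfl⟩ : ∃ s d, α = s + d ∧ β = s - d :=
    ⟨(α + β) / 2, (α - β) / 2, by ring, by ring⟩
  have hsum_to_product : sin (s + d) * sin (k * (s + d) + (s - d))
      - sin (s - d) * sin (k * (s - d) + (s + d)) =
      2 * (sin d * sin (k * s) * cos (d - k * d) + sin s * sin (k * d) * cos (s + k * s)) := by
    simp only [mul_add, mul_sub, sin_add, cos_add, sin_sub, cos_sub]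
    linear_combination (2 * sin s * cos s * cos (k * s) * sin (k * d)
        - 2 * sin s ^ 2 * sin (k * s) * sin (k * d)) * sin_sq_add_cos_sq d +
      (2 * cos d * sin d * sin (k * s) * cos (k * d)
        + 2 * sin d ^ 2 * sin (k * s) * sin (k * d)) * sin_sq_add_cos_sq s
  have := sin_mul_sin_mul_cos_add_sin_mul_sin_mul_cos_pos hk0 hk1
    (d := d) (s := s) (by linarith) (by linarith) (by linarith)
  linarith

theorem eq_of_sin_mul_sin_mul_add_eq {k α β : ℝ} (hk0 : 0 < k) (hk1 : k ≤ 1)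
    (hα : 0 < α) (hβ : 0 < β) (hαβ : α + β < π)
    (h : sin α * sin (k * α + β) = sin β * sin (k * β + α)) : α = β := by
  rcases lt_trichotomy α β with hlt | heq | hgt
  · linarith [sin_mul_sin_mul_add_lt_sin_mul_sin_mul_add hk0 hk1 hα hlt (by linarith)]
  · exact heq
  · linarith [sin_mul_sin_mul_add_lt_sin_mul_sin_mul_add hk0 hk1 hβ hgt hαβ]

theorem abs_sin_mul_sub_eq_abs_sin_mul_abs_add_abs {k a b : ℝ} (hab : a * b ≤ 0) :
    |sin (k * a - b)| = |sin (k * |a| + |b|)| := by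
  rcases mul_nonpos_iff.1 hab with ⟨ha, hb⟩ | ⟨ha, hb⟩
  · rw [abs_of_nonneg ha, abs_of_nonpos hb, sub_eq_add_neg]
  · rw [abs_of_nonpos ha, abs_of_nonneg hb, ← abs_neg (sin _), ← sin_neg]
    ring_nf

variable {V P : Type*} [NormedAddCommGroup V] [InnerProductSpace ℝ V] [MetricSpace P]
  [NormedAddTorsor V P]

theorem angle_add_angle_lt_pi_of_not_collinear {A B C : P}
    (h : ¬Collinear ℝ ({A, B, C} : Set P)) : ∠ B A C + ∠ A B C < π := by
  have hsum := angle_add_angle_add_angle_eq_pi C (ne₁₂_of_not_collinear h).symm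
  have hC : 0 < ∠ B C A := angle_pos_of_not_collinear (by
    rwa [Set.pair_comm C A, Set.insert_comm B A])
  rw [angle_comm B A C]
  linarith

variable [Fact (Module.finrank ℝ V = 2)] [Module.Oriented ℝ V (Fin 2)]

theorem abs_sin_oangle_eq_sin_angle {p p₁ p₂ : P} (hp₁ : p₁ ≠ p) (hp₂ : p₂ ≠ p) :
    |(∡ p₁ p p₂).sin| = sin (∠ p₁ p p₂) := by
  have := sin_nonneg_of_nonneg_of_le_pi (angle_nonneg p₁ p p₂) (angle_le_pi p₁ p p₂)
  rcases oangle_eq_angle_or_eq_neg_angle hp₁ hp₂ with h | h <;>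
    simp [h, Real.Angle.sin_coe, abs_of_nonneg this]

theorem toReal_oangle_mul_toReal_oangle_nonpos {A B C : P}
    (h : ¬Collinear ℝ ({A, B, C} : Set P)) :
    (∡ B A C).toReal * (∡ A B C).toReal ≤ 0 := by
  have hA : ∡ B A C ≠ π := (oangle_ne_zero_and_ne_pi_iff_not_collinear.2 (by
    rwa [Set.insert_comm])).2
  have hB : ∡ A B C ≠ π := (oangle_ne_zero_and_ne_pi_iff_not_collinear.2 h).2
  have hsign : (∡ A B C).sign = -(∡ B A C).sign := by
    rw [oangle_rotate_sign C A B, oangle_rev B A C, Real.Angle.sign_neg]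
  rw [← sign_nonpos_iff, sign_mul, Real.Angle.sign_toReal hA, Real.Angle.sign_toReal hB, hsign]
  cases (∡ B A C).sign <;> decide

theorem two_zsmul_oangle_eq_of_mem_line {A B C A₁ : P} {θ : Real.Angle}
    (hA₁ : A₁ ∈ line[ℝ, B, C]) (hBA : B ≠ A) (hA₁B : A₁ ≠ B) (hA₁A : A₁ ≠ A) (hCB : C ≠ B)
    (h : ∡ B A A₁ = θ) : (2 : ℤ) • ∡ B A₁ A = (2 : ℤ) • (θ - ∡ A B C) := by
  have hB : (2 : ℤ) • ∡ A B A₁ = (2 : ℤ) • ∡ A B C :=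
    (collinear_insert_of_mem_affineSpan_pair hA₁).two_zsmul_oangle_eq_right hA₁B hCB
  have hsum := oangle_add_oangle_add_oangle_eq_pi hBA hA₁B hA₁A.symm
  rw [oangle_rev B A A₁, h] at hsum
  have : ∡ B A₁ A = π + θ - ∡ A B A₁ := by rw [← hsum]; abel
  rw [this, smul_sub, smul_add, hB, Real.Angle.two_zsmul_coe_pi, zero_add, smul_sub]

theorem dist_mul_abs_sin_eq_of_oangle_eq_mul {A B C A₁ : P} {k : ℝ}
    (hABC : ¬Collinear ℝ ({A, B, C} : Set P)) (hA₁ : A₁ ∈ line[ℝ, B, C]) (hA₁B : A₁ ≠ B)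
    (h : ∡ B A A₁ = (k * (∡ B A C).toReal : ℝ)) :
    dist A A₁ * |sin (k * ∠ B A C + ∠ A B C)| = dist A B * sin (∠ A B C) := by
  have hBA : B ≠ A := ne₁₂_of_not_collinear hABC |>.symm
  have hCA : C ≠ A := ne₁₃_of_not_collinear hABC |>.symm
  have hCB : C ≠ B := ne₂₃_of_not_collinear hABC |>.symm
  have hA₁A : A₁ ≠ A := by
    rintro rfl
    exact hABC (collinear_insert_of_mem_affineSpan_pair hA₁)
  have hsinB : sin (∠ A B A₁) = sin (∠ A B C) := by
    rw [← abs_sin_oangle_eq_sin_angle hBA.symm hA₁B, ← abs_sin_oangle_eq_sin_angle hBA.symm hCB,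
      Real.Angle.abs_sin_eq_of_two_zsmul_eq
        ((collinear_insert_of_mem_affineSpan_pair hA₁).two_zsmul_oangle_eq_right hA₁B hCB)]
  have hsinA₁ : sin (∠ B A₁ A) = |sin (k * ∠ B A C + ∠ A B C)| := by
    rw [← abs_sin_oangle_eq_sin_angle hA₁B.symm hA₁A.symm,
      Real.Angle.abs_sin_eq_of_two_zsmul_eq
        (two_zsmul_oangle_eq_of_mem_line hA₁ hBA hA₁B hA₁A hCB h),
      ← Real.Angle.coe_toReal (∡ A B C), ← Real.Angle.coe_sub, Real.Angle.sin_coe,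
      angle_eq_abs_oangle_toReal hBA hCA, angle_eq_abs_oangle_toReal hBA.symm hCB]
    exact abs_sin_mul_sub_eq_abs_sin_mul_abs_add_abs (toReal_oangle_mul_toReal_oangle_nonpos hABC)
  have hlaw := law_sin A₁ B A
  rw [angle_comm A₁ B A, hsinB, dist_comm B A, angle_comm A A₁ B, hsinA₁] at hlaw
  linarith

end SteinerLehmus

open SteinerLehmus in
theorem generalized_steiner_lehmus
    [Fact (Module.finrank ℝ (EuclideanSpace ℝ (Fin 2)) = 2)]
    [Module.Oriented ℝ (EuclideanSpace ℝ (Fin 2)) (Fin 2)]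
    (A B C A₁ B₁ : Pt) (k : ℝ) (hk0 : 0 < k) (hk1 : k ≤ 1)
    (hABC : AffineIndependent ℝ ![A, B, C])
    (hA₁ : A₁ ∈ affineSpan ℝ ({B, C} : Set Pt)) (hA₁B : A₁ ≠ B)
    (hB₁ : B₁ ∈ affineSpan ℝ ({A, C} : Set Pt)) (hB₁A : B₁ ≠ A)
    (htriA : ∡ B A A₁ = ((k * (∡ B A C).toReal : ℝ) : Real.Angle))
    (htriB : ∡ A B B₁ = ((k * (∡ A B C).toReal : ℝ) : Real.Angle))
    (hlen : dist A A₁ = dist B B₁) :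
    ∠ B A C = ∠ A B C ∧ dist A C = dist B C := by
  rw [affineIndependent_iff_not_collinear_set] at hABC
  have hBAC : ¬Collinear ℝ ({B, A, C} : Set Pt) := by rwa [Set.insert_comm]
  have hα : 0 < ∠ B A C := angle_pos_of_not_collinear hBAC
  have hβ : 0 < ∠ A B C := angle_pos_of_not_collinear hABC
  have hαβ := angle_add_angle_lt_pi_of_not_collinear hABC
  have hcevA := dist_mul_abs_sin_eq_of_oangle_eq_mul hABC hA₁ hA₁B htriA
  have hcevB := dist_mul_abs_sin_eq_of_oangle_eq_mul hBAC hB₁ hB₁A htriB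
  rw [abs_of_pos (sin_pos_of_pos_of_lt_pi (by positivity) (by nlinarith))] at hcevA hcevB
  have hAB : dist A B ≠ 0 := dist_ne_zero.2 (ne₁₂_of_not_collinear hABC)
  have hangle : ∠ B A C = ∠ A B C := by
    refine eq_of_sin_mul_sin_mul_add_eq hk0 hk1 hα hβ hαβ (mul_left_cancel₀ hAB ?_)
    rw [dist_comm B A] at hcevB
    linear_combination sin (k * ∠ A B C + ∠ B A C) * hcevA - sin (k * ∠ B A C + ∠ A B C) * hcevB
      - sin (k * ∠ B A C + ∠ A B C) * sin (k * ∠ A B C + ∠ B A C) * hlen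
  refine ⟨hangle, ?_⟩
  have hC : ∠ A C B ≠ π := (angle_lt_pi_of_not_collinear (by rwa [Set.pair_comm C B])).ne
  rw [dist_comm A C, dist_comm B C]
  exact dist_eq_of_angle_eq_angle_of_angle_ne_pi (by rwa [angle_comm C A B, angle_comm C B A]) hC
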